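/- The canonical relation R^C is functional: if (X, ā, Y) ∈ R^C and (X, ā, Z) ∈ R^C, then Y = Z. -/

import Mathlib

/-- Terms: variables or constants. -/
inductive Tm (C : Type) : Type
  | var : ℕ → Tm C
  | const : C → Tm C
deriving DecidableEq

/-- Formulas of first-order coalition logic over a signature ⟨n, C, Ap⟩. -/
inductive Form (n : ℕ) (C : Type) (Ap : Type) : Type
  | atom : Ap → Form n C Ap
  | neg : Form n C Ap → Form n C Ap
  | and : Form n C Ap → Form n C Ap → Form n C Ap
  | box : (Fin n → Tm C) → Form n C Ap → Form n C Ap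
  | all : ℕ → Form n C Ap → Form n C Ap

namespace Form

variable {n : ℕ} {C Ap : Type}

def imp (φ ψ : Form n C Ap) : Form n C Ap := .neg (.and φ (.neg ψ))
def iff (φ ψ : Form n C Ap) : Form n C Ap := .and (imp φ ψ) (imp ψ φ)
def ex (x : ℕ) (φ : Form n C Ap) : Form n C Ap := .neg (.all x (.neg φ))

open Classical in
/-- Substitution of a term for a variable. -/
noncomputable def substT (t : Tm C) (x : ℕ) : Form n C Ap → Form n C Ap
  | .atom p => .atom p
  | .neg φ => .neg (substT t x φ)
  | .and φ ψ => .and (substT t x φ) (substT t x ψ)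
  | .box ts φ => .box (fun i => if ts i = .var x then t else ts i) (substT t x φ)
  | .all y φ => if y = x then .all y φ else .all y (substT t x φ)

/-- Substitution of a constant for a variable. -/
noncomputable def subst (a : C) (x : ℕ) (φ : Form n C Ap) : Form n C Ap := substT (.const a) x φ

/-- Free variables. -/
def FV : Form n C Ap → Finset ℕ
  | .atom _ => ∅
  | .neg φ => FV φ
  | .and φ ψ => FV φ ∪ FV ψ
  | .box ts φ => FV φ ∪ Finset.univ.biUnion (fun i => match ts i with | Tm.var x => {x} | _ => ∅)
  | .all y φ => FV φ \ {y}

/-- A sentence (closed formula). -/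
def closed (φ : Form n C Ap) : Prop := FV φ = ∅

/-- Universal closure of a formula. -/
def closure (φ : Form n C Ap) : Form n C Ap := ((FV φ).sort (· ≤ ·)).foldr Form.all φ

def size : Form n C Ap → ℕ
  | .atom _ => 1
  | .neg φ => size φ + 1
  | .and φ ψ => size φ + size ψ + 1
  | .box _ φ => size φ + 1
  | .all _ φ => size φ + 1

theorem size_substT (t : Tm C) (x : ℕ) (φ : Form n C Ap) :
    size (substT t x φ) = size φ := by
  induction φ with
  | atom p => rfl
  | neg φ ih => simp [substT, size, ih]
  | and φ ψ ih1 ih2 => simp [substT, size, ih1, ih2]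
  | box ts φ ih => simp [substT, size, ih]
  | all y φ ih => by_cases h : y = x <;> simp [substT, size, h, ih]

/-- Whether a term occurs in a formula. -/
def occursT (t : Tm C) : Form n C Ap → Prop
  | .atom _ => False
  | .neg φ => occursT t φ
  | .and φ ψ => occursT t φ ∨ occursT t ψ
  | .box ts φ => (∃ i, ts i = t) ∨ occursT t φ
  | .all y φ => (t = Tm.var y) ∨ occursT t φ

end Form

/-- A concurrent game structure over a signature ⟨n, C, Ap⟩ (actions = constants). -/
structure CGS (n : ℕ) (C : Type) (Ap : Type) where
  S : Type
  R : S → (Fin n → C) → S → Prop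
  V : Ap → S → Prop

namespace CGS

variable {n : ℕ} {C Ap : Type}

def Serial (G : CGS n C Ap) : Prop := ∀ s d, ∃ t, G.R s d t

def Functional (G : CGS n C Ap) : Prop := ∀ s d t v, G.R s d t → G.R s d v → t = v

end CGS

/-- Satisfaction of (closed) formulas in a CGS. -/
def Sat {n : ℕ} {C Ap : Type} (G : CGS n C Ap) : G.S → Form n C Ap → Prop
  | s, .atom p => G.V p s
  | s, .neg φ => ¬ Sat G s φ
  | s, .and φ ψ => Sat G s φ ∧ Sat G s ψ
  | s, .box ts φ => ∃ d : Fin n → C, (∀ i, ts i = Tm.const (d i)) ∧ ∃ t, G.R s d t ∧ Sat G t φ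
  | s, .all x φ => ∀ a : C, Sat G s (Form.subst a x φ)
termination_by _ φ => Form.size φ
decreasing_by all_goals simp [Form.subst, Form.size_substT, Form.size] <;> omega

/-- Truth of a possibly open formula: truth of its universal closure. -/
def SatC {n : ℕ} {C Ap : Type} (G : CGS n C Ap) (s : G.S) (φ : Form n C Ap) : Prop :=
  Sat G s (Form.closure φ)

/-- Validity in a CGS. -/
def ValidIn {n : ℕ} {C Ap : Type} (G : CGS n C Ap) (φ : Form n C Ap) : Prop :=
  ∀ s : G.S, SatC G s φ

/-- Propositional evaluation treating atoms, boxes and quantified formulas as atomic. -/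
def evalP {n : ℕ} {C Ap : Type} (v : Form n C Ap → Prop) : Form n C Ap → Prop
  | .neg φ => ¬ evalP v φ
  | .and φ ψ => evalP v φ ∧ evalP v ψ
  | .atom p => v (.atom p)
  | .box ts φ => v (.box ts φ)
  | .all x φ => v (.all x φ)

/-- Propositional tautologies. -/
def Taut {n : ℕ} {C Ap : Type} (φ : Form n C Ap) : Prop :=
  ∀ v : Form n C Ap → Prop, evalP v φ

/-- The axiom system of first-order coalition logic. -/
inductive Deriv {n : ℕ} {C Ap : Type} : Form n C Ap → Prop
  | PC {φ} : Taut φ → Deriv φ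
  | K (ts : Fin n → Tm C) (φ ψ) :
      Deriv (Form.iff (.and (.box ts φ) (.box ts ψ)) (.box ts (.and φ ψ)))
  | N (ts : Fin n → Tm C) (φ) :
      Deriv (Form.iff (.neg (.box ts φ)) (.box ts (.neg φ)))
  | E (x : ℕ) (t : Tm C) (φ) : Deriv (Form.imp (.all x φ) (Form.substT t x φ))
  | B (ts : Fin n → Tm C) (x : ℕ) (φ) (h : ∀ i, ts i ≠ Tm.var x) :
      Deriv (Form.imp (.all x (.box ts φ)) (.box ts (.all x φ)))
  | MP {φ ψ} : Deriv (Form.imp φ ψ) → Deriv φ → Deriv ψ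
  | Nec (ts : Fin n → Tm C) {φ} : Deriv φ → Deriv (.box ts φ)
  | Gen {φ ψ} (t : Tm C) (x : ℕ) :
      Deriv (Form.imp φ (Form.substT t x ψ)) → ¬ Form.occursT t φ →
      Deriv (Form.imp φ (.all x ψ))

/-- Derivability from a set of formulas. -/
def DerivFrom {n : ℕ} {C Ap : Type} (X : Set (Form n C Ap)) (φ : Form n C Ap) : Prop :=
  ∃ L : List (Form n C Ap), (∀ ψ ∈ L, ψ ∈ X) ∧ Deriv (L.foldr Form.imp φ)

def Consistent {n : ℕ} {C Ap : Type} (X : Set (Form n C Ap)) : Prop :=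
  ¬ ∃ φ, DerivFrom X φ ∧ DerivFrom X (.neg φ)

/-- A set of sentences. -/
def SentenceSet {n : ℕ} {C Ap : Type} (X : Set (Form n C Ap)) : Prop :=
  ∀ φ ∈ X, Form.closed φ

/-- Maximal consistent set (of sentences). -/
def MCS {n : ℕ} {C Ap : Type} (X : Set (Form n C Ap)) : Prop :=
  Consistent X ∧ ∀ ψ, Form.closed ψ → ψ ∉ X → ¬ Consistent (insert ψ X)

/-- The ∀-property. -/
def AllProp {n : ℕ} {C Ap : Type} (X : Set (Form n C Ap)) : Prop :=
  ∀ (φ : Form n C Ap) (x : ℕ), Form.FV φ ⊆ {x} →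
    ∃ a : C, Form.imp (Form.subst a x φ) (.all x φ) ∈ X

/-- The canonical model. -/
def canonical (n : ℕ) (C Ap : Type) : CGS n C Ap where
  S := {X : Set (Form n C Ap) // SentenceSet X ∧ MCS X ∧ AllProp X}
  R := fun X d Y => ∀ φ, φ ∈ Y.1 → Form.box (fun i => Tm.const (d i)) φ ∈ X.1
  V := fun p X => Form.atom p ∈ X.1

/-- Renaming of constants. -/
def Tm.mapC {C C' : Type} (f : C → C') : Tm C → Tm C'
  | .var x => .var x
  | .const c => .const (f c)

def Form.mapC {n : ℕ} {C C' Ap : Type} (f : C → C') : Form n C Ap → Form n C' Ap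
  | .atom p => .atom p
  | .neg φ => .neg (mapC f φ)
  | .and φ ψ => .and (mapC f φ) (mapC f ψ)
  | .box ts φ => .box (fun i => (ts i).mapC f) (mapC f φ)
  | .all y φ => .all y (mapC f φ)

/-!
If `φ ∈ Y` but `φ ∉ Z`, maximality of `Z` puts `¬φ` in `Z`, so both `[d]φ` and `[d]¬φ` lie in `X`.
Axiom N turns `[d]¬φ` into `¬[d]φ`, contradicting the consistency of `X`; hence `Y ⊆ Z`, and
`Z ⊆ Y` by symmetry.
-/

section

variable {n : ℕ} {C Ap : Type}

theorem evalP_imp (v : Form n C Ap → Prop) (φ ψ : Form n C Ap) :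
    evalP v (Form.imp φ ψ) ↔ (evalP v φ → evalP v ψ) := by
  simp only [Form.imp, evalP]
  tauto

theorem evalP_foldr_imp (v : Form n C Ap → Prop) (L : List (Form n C Ap)) (χ : Form n C Ap) :
    evalP v (L.foldr Form.imp χ) ↔ ((∀ ψ ∈ L, evalP v ψ) → evalP v χ) := by
  induction L with
  | nil => simp
  | cons ψ L ih =>
    simp only [List.foldr_cons, evalP_imp, ih, List.forall_mem_cons]
    tauto

namespace Deriv

theorem of_taut_imp {φ ψ : Form n C Ap} (h : Taut (Form.imp φ ψ)) (hφ : Deriv φ) : Deriv ψ :=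
  MP (PC h) hφ

theorem of_taut_imp₂ {φ ψ χ : Form n C Ap} (h : Taut (Form.imp φ (Form.imp ψ χ)))
    (hφ : Deriv φ) (hψ : Deriv ψ) : Deriv χ :=
  MP (MP (PC h) hφ) hψ

theorem imp_self (φ : Form n C Ap) : Deriv (Form.imp φ φ) :=
  PC fun v => (evalP_imp v φ φ).2 id

theorem neg_box_of_box_neg (ts : Fin n → Tm C) (φ : Form n C Ap) :
    Deriv (Form.imp (.box ts (.neg φ)) (.neg (.box ts φ))) :=
  of_taut_imp (fun v => by simp only [Form.iff, evalP_imp, evalP]; tauto) (N ts φ)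

end Deriv

namespace DerivFrom

variable {X : Set (Form n C Ap)} {φ ψ : Form n C Ap}

theorem of_mem (h : φ ∈ X) : DerivFrom X φ :=
  ⟨[φ], by simpa using h, Deriv.imp_self φ⟩

theorem of_deriv (h : Deriv φ) : DerivFrom X φ :=
  ⟨[], by simp, h⟩

theorem mp (hφψ : DerivFrom X (Form.imp φ ψ)) (hφ : DerivFrom X φ) : DerivFrom X ψ := by
  obtain ⟨L₁, hL₁, hD₁⟩ := hφψ
  obtain ⟨L₂, hL₂, hD₂⟩ := hφ
  refine ⟨L₁ ++ L₂, fun χ hχ => (List.mem_append.1 hχ).elim (hL₁ χ) (hL₂ χ), ?_⟩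
  refine Deriv.of_taut_imp₂ (fun v => ?_) hD₁ hD₂
  simp only [evalP_imp, evalP_foldr_imp, List.mem_append]
  intro h₁ h₂ hall
  exact h₁ (fun χ hχ => hall χ (.inl hχ)) (h₂ fun χ hχ => hall χ (.inr hχ))

theorem imp_of_insert (h : DerivFrom (insert φ X) ψ) : DerivFrom X (Form.imp φ ψ) := by
  classical
  obtain ⟨L, hL, hD⟩ := h
  refine ⟨L.filter (· ≠ φ), fun χ hχ => ?_, Deriv.of_taut_imp (fun v => ?_) hD⟩
  · obtain ⟨hχL, hχφ⟩ := List.mem_filter.1 hχ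
    exact (hL χ hχL).resolve_left (by simpa using hχφ)
  · simp only [evalP_imp, evalP_foldr_imp]
    intro h hall hφ
    refine h fun χ hχL => ?_
    by_cases hχφ : χ = φ
    · exact hχφ ▸ hφ
    · exact hall χ (List.mem_filter.2 ⟨hχL, by simpa using hχφ⟩)

theorem neg_of_not_consistent_insert (h : ¬Consistent (insert φ X)) : DerivFrom X (.neg φ) := by
  obtain ⟨χ, hχ, hnχ⟩ := not_not.1 h
  have reductio : Deriv (Form.imp (Form.imp φ χ) (Form.imp (Form.imp φ (.neg χ)) (.neg φ))) :=
    Deriv.PC fun v => by simp only [evalP_imp, evalP]; tauto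
  exact mp (mp (of_deriv reductio) (imp_of_insert hχ)) (imp_of_insert hnχ)

end DerivFrom

theorem MCS.neg_mem_of_not_mem {X : Set (Form n C Ap)} (hX : MCS X) {φ : Form n C Ap}
    (hφ : Form.closed φ) (hφX : φ ∉ X) : Form.neg φ ∈ X := by
  by_contra hnφX
  exact hX.1 ⟨.neg φ, .neg_of_not_consistent_insert (hX.2 φ hφ hφX),
    .neg_of_not_consistent_insert (hX.2 (.neg φ) hφ hnφX)⟩

theorem Consistent.box_neg_not_mem {X : Set (Form n C Ap)} (hX : Consistent X)
    {ts : Fin n → Tm C} {φ : Form n C Ap} (hφ : Form.box ts φ ∈ X) :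
    Form.box ts (.neg φ) ∉ X := fun hnφ =>
  hX ⟨.box ts φ, .of_mem hφ, .mp (.of_deriv (Deriv.neg_box_of_box_neg ts φ)) (.of_mem hnφ)⟩

theorem subset_of_forall_box_mem {X Y Z : Set (Form n C Ap)} {ts : Fin n → Tm C}
    (hX : Consistent X) (hY : SentenceSet Y) (hZ : MCS Z)
    (hXY : ∀ φ ∈ Y, Form.box ts φ ∈ X) (hXZ : ∀ φ ∈ Z, Form.box ts φ ∈ X) : Y ⊆ Z :=
  fun φ hφY => by_contra fun hφZ =>
    hX.box_neg_not_mem (hXY φ hφY) (hXZ _ (hZ.neg_mem_of_not_mem (hY φ hφY) hφZ))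

end

theorem canonical_functional_general {n : ℕ} {C Ap : Type}
    (X Y Z : Set (Form n C Ap))
    (hXm : MCS X)
    (hYs : SentenceSet Y) (hYm : MCS Y)
    (hZs : SentenceSet Z) (hZm : MCS Z)
    (d : Fin n → C)
    (hXY : ∀ φ, φ ∈ Y → Form.box (fun i => Tm.const (d i)) φ ∈ X)
    (hXZ : ∀ φ, φ ∈ Z → Form.box (fun i => Tm.const (d i)) φ ∈ X) :
    Y = Z :=
  (subset_of_forall_box_mem hXm.1 hYs hZm hXY hXZ).antisymm
    (subset_of_forall_box_mem hXm.1 hZs hYm hXZ hXY)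

/-- the canonical relation is functional. -/
theorem canonical_functional {n : ℕ} {C Ap : Type}
    (X Y Z : Set (Form n C Ap))
    (hXs : SentenceSet X) (hXm : MCS X) (hXa : AllProp X)
    (hYs : SentenceSet Y) (hYm : MCS Y) (hYa : AllProp Y)
    (hZs : SentenceSet Z) (hZm : MCS Z) (hZa : AllProp Z)
    (d : Fin n → C)
    (hXY : ∀ φ, φ ∈ Y → Form.box (fun i => Tm.const (d i)) φ ∈ X)
    (hXZ : ∀ φ, φ ∈ Z → Form.box (fun i => Tm.const (d i)) φ ∈ X) :
    Y = Z :=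
  canonical_functional_general X Y Z hXm hYs hYm hZs hZm d hXY hXZ
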